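/- Fix 0 < ε < 1/4 and let S_ε = π(U) ⊂ 𝕋² where U = U₁ ∪ U₂ as in Definition 3.5, and π : ℝ² → 𝕋² = (ℝ/ℤ)² is the projection. Let θ_x, θ_z ∈ S_ε and θ_y ∈ 𝕋² with 2θ_y = θ_x + θ_z. Write x = π⁻¹(θ_x), y = π⁻¹(θ_y), z = π⁻¹(θ_z) ∈ [0,1)² and d = (z - x)/2. If |d₁ + d₂| ≤ ε/1000, then (1-{x₁})² + (1-{z₁})² - 2(1-{y₁})² ≥ 2d₁². -/

import Mathlib

/-!
Write `a, b, c` for `{x₁}, {y₁}, {z₁}`. Since `2y₁ ≡ x₁ + z₁ (mod 1)`, `b` equals `(x₁ + z₁)/2` or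
`(x₁ + z₁ - 1)/2` according as `x₁ + z₁ < 1` or not. If `x₁` and `z₁` lie in the same half of
`[0,1)`, this says `b = (a + c)/2`, and the claim is the identity
`f a + f c - 2 f ((a + c)/2) = (a - c)²/2` for `f t = (1 - t)²`. If they lie in different halves,
`d₁ + d₂ ≈ 0` keeps both points out of `U₂`, so both lie in `U₁`, which forces `x₁ + z₁ < 1`;
then `b = (x₁ + z₁)/2` and the two sides differ by `5/4 - max x₁ z₁ > 0`.
-/

instance : Fact ((0:ℝ) < 1) := ⟨zero_lt_one⟩

/-- The nonstandard fractional map `{·} : [0,1) → [0,1/2)`. -/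
noncomputable def br (t : ℝ) : ℝ := if t < 1/2 then t else t - 1/2

/-- The set `U₁` from Definition 3.5 of the paper. -/
def U1 : Set (ℝ × ℝ) :=
  {v | (v ∈ Set.Ico (0:ℝ) (1/2) ×ˢ Set.Ico (1/2:ℝ) 1 ∪
        Set.Ico (1/2:ℝ) 1 ×ˢ Set.Ico (0:ℝ) (1/2)) ∧ v.1 + v.2 < 3/4}

/-- The set `U₂` from Definition 3.5 of the paper. -/
def U2 (ε : ℝ) : Set (ℝ × ℝ) :=
  {v | v ∈ Set.Ico (0:ℝ) (1/2) ×ˢ Set.Ico (0:ℝ) 1 ∧ 3/4 + ε < v.1 + v.2 ∧ v.1 + v.2 < 5/4}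

/-- The projection `ℝ² → 𝕋²`. -/
noncomputable def torusProj (v : ℝ × ℝ) : AddCircle (1:ℝ) × AddCircle (1:ℝ) :=
  ((v.1 : AddCircle (1:ℝ)), (v.2 : AddCircle (1:ℝ)))

/-- The unique representative in `[0,1)` of a point of `ℝ/ℤ`. -/
noncomputable def rep (θ : AddCircle (1:ℝ)) : ℝ := (AddCircle.equivIco 1 0 θ : ℝ)

/-- The representative in `[0,1)²` of a point of `𝕋²`. -/
noncomputable def rep2 (θ : AddCircle (1:ℝ) × AddCircle (1:ℝ)) : ℝ × ℝ :=
  (rep θ.1, rep θ.2)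

open Set

lemma br_of_lt {t : ℝ} (h : t < 1/2) : br t = t := if_pos h

lemma br_of_le {t : ℝ} (h : 1/2 ≤ t) : br t = t - 1/2 := if_neg (not_lt.2 h)

lemma coe_rep (θ : AddCircle (1:ℝ)) : (rep θ : AddCircle (1:ℝ)) = θ :=
  AddCircle.coe_equivIco

lemma rep_mem_Ico (θ : AddCircle (1:ℝ)) : rep θ ∈ Ico (0:ℝ) 1 := by
  simpa [rep] using (AddCircle.equivIco 1 0 θ).2

lemma rep_coe_of_mem {t : ℝ} (ht : t ∈ Ico (0:ℝ) 1) : rep t = t :=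
  AddCircle.equivIco_coe_of_mem (by simpa using ht)

lemma rep2_torusProj_of_mem {v : ℝ × ℝ} (hv : v ∈ Ico (0:ℝ) 1 ×ˢ Ico (0:ℝ) 1) :
    rep2 (torusProj v) = v :=
  Prod.ext (rep_coe_of_mem hv.1) (rep_coe_of_mem hv.2)

lemma rep2_mem_of_mem_image {θ : AddCircle (1:ℝ) × AddCircle (1:ℝ)} {V : Set (ℝ × ℝ)}
    (hV : V ⊆ Ico (0:ℝ) 1 ×ˢ Ico (0:ℝ) 1) (hθ : θ ∈ torusProj '' V) : rep2 θ ∈ V := by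
  obtain ⟨v, hv, rfl⟩ := hθ
  rwa [rep2_torusProj_of_mem (hV hv)]

lemma exists_int_two_mul_rep_sub_eq {α β γ : AddCircle (1:ℝ)} (h : 2 • β = α + γ) :
    ∃ k : ℤ, 2 * rep β - (rep α + rep γ) = k := by
  have hzero : ((2 * rep β - (rep α + rep γ) : ℝ) : AddCircle (1:ℝ)) = 0 := by
    rw [two_mul, AddCircle.coe_sub, AddCircle.coe_add, AddCircle.coe_add, coe_rep, coe_rep,
      coe_rep, ← two_nsmul, h, sub_self]
  obtain ⟨k, hk⟩ := (AddCircle.coe_eq_zero_iff _).mp hzero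
  exact ⟨k, by simpa using hk.symm⟩

section U

variable {ε : ℝ} {x z : ℝ × ℝ}

lemma mem_Ico_prod_of_mem_U (hx : x ∈ U1 ∪ U2 ε) : x ∈ Ico (0:ℝ) 1 ×ˢ Ico (0:ℝ) 1 := by
  rcases hx with ⟨⟨h1, h2⟩ | ⟨h1, h2⟩, _⟩ | ⟨⟨h1, h2⟩, _⟩
  · exact ⟨⟨h1.1, by linarith [h1.2]⟩, ⟨by linarith [h2.1], h2.2⟩⟩
  · exact ⟨⟨by linarith [h1.1], h1.2⟩, ⟨h2.1, by linarith [h2.2]⟩⟩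
  · exact ⟨⟨h1.1, by linarith [h1.2]⟩, h2⟩

lemma fst_add_fst_lt_one_of_mem_U (hx : x ∈ U1 ∪ U2 ε) (hz : z ∈ U1 ∪ U2 ε)
    (hclose : x.1 + x.2 ≤ z.1 + z.2 + ε) (hx1 : x.1 < 1/2) (hz1 : 1/2 ≤ z.1) :
    x.1 + z.1 < 1 := by
  have hzU1 : 0 ≤ z.2 ∧ z.1 + z.2 < 3/4 := by
    rcases hz with ⟨⟨h1, -⟩ | ⟨-, h2⟩, hs⟩ | ⟨⟨h1, -⟩, -⟩
    · linarith [h1.2]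
    · exact ⟨h2.1, hs⟩
    · linarith [h1.2]
  rcases hx with ⟨⟨-, h2⟩ | ⟨h1, -⟩, hs⟩ | ⟨-, hs, -⟩
  · linarith [h2.1]
  · linarith [h1.1]
  · linarith

lemma half_le_fst_of_one_le_fst_add_fst (hx : x ∈ U1 ∪ U2 ε) (hz : z ∈ U1 ∪ U2 ε)
    (hclose : |(x.1 + x.2) - (z.1 + z.2)| ≤ ε) (hs : 1 ≤ x.1 + z.1) :
    1/2 ≤ x.1 ∧ 1/2 ≤ z.1 := by
  obtain ⟨hclose₁, hclose₂⟩ := abs_le.mp hclose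
  by_contra! h
  rcases lt_or_ge x.1 (1/2) with hx1 | hx1
  · rcases lt_or_ge z.1 (1/2) with hz1 | hz1
    · linarith
    · linarith [fst_add_fst_lt_one_of_mem_U hx hz (by linarith) hx1 hz1]
  · linarith [fst_add_fst_lt_one_of_mem_U hz hx (by linarith) (h hx1) hx1]

end U

lemma br_eq_half_of_two_mul_sub_eq_int {y s : ℝ} {k : ℤ} (hy : y ∈ Ico (0:ℝ) 1)
    (hs : s ∈ Ico (0:ℝ) 1) (hk : 2 * y - s = k) : br y = s / 2 := by
  have hk₀ : (-1:ℝ) < k := by linarith [hy.1, hs.2]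
  have hk₁ : (k:ℝ) < 2 := by linarith [hy.2, hs.1]
  obtain rfl | rfl : k = 0 ∨ k = 1 := by
    have : -1 < k ∧ k < 2 := ⟨by exact_mod_cast hk₀, by exact_mod_cast hk₁⟩
    omega
  · push_cast at hk
    rw [br_of_lt (by linarith [hs.2])]
    linarith
  · push_cast at hk
    rw [br_of_le (by linarith [hs.1])]
    linarith

lemma sq_sub_div_two_le_br {x y z : ℝ} {k : ℤ} (hx : x ∈ Ico (0:ℝ) 1) (hy : y ∈ Ico (0:ℝ) 1)
    (hz : z ∈ Ico (0:ℝ) 1) (hk : 2 * y - (x + z) = k) (hs : 1 ≤ x + z → 1/2 ≤ x ∧ 1/2 ≤ z) :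
    (z - x)^2 / 2 ≤ (1 - br x)^2 + (1 - br z)^2 - 2 * (1 - br y)^2 := by
  rcases lt_or_ge (x + z) 1 with hs₁ | hs₁
  · rw [br_eq_half_of_two_mul_sub_eq_int hy ⟨by linarith [hx.1, hz.1], hs₁⟩ hk]
    unfold br
    split_ifs <;> nlinarith [hx.2, hz.2]
  · obtain ⟨hx₁, hz₁⟩ := hs hs₁
    have hk' : 2 * y - (x + z - 1) = (k + 1 : ℤ) := by push_cast; linarith
    rw [br_eq_half_of_two_mul_sub_eq_int hy ⟨by linarith, by linarith [hx.2, hz.2]⟩ hk',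
      br_of_le hx₁, br_of_le hz₁]
    nlinarith

theorem freiman_two (ε : ℝ) (hε : 0 < ε)
    (θx θz : AddCircle (1:ℝ) × AddCircle (1:ℝ))
    (θy : AddCircle (1:ℝ) × AddCircle (1:ℝ))
    (hθx : θx ∈ torusProj '' (U1 ∪ U2 ε)) (hθz : θz ∈ torusProj '' (U1 ∪ U2 ε))
    (hap : 2 • θy = θx + θz)
    (x y z d : ℝ × ℝ)
    (hx : x = rep2 θx) (hy : y = rep2 θy) (hz : z = rep2 θz)
    (hd : d = (1/2 : ℝ) • (z - x))
    (hsmall : |d.1 + d.2| ≤ ε/1000) :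
    (1 - br x.1)^2 + (1 - br z.1)^2 - 2 * (1 - br y.1)^2 ≥ 2 * d.1^2 := by
  obtain ⟨k, hk⟩ := exists_int_two_mul_rep_sub_eq (congrArg Prod.fst hap)
  replace hk : 2 * y.1 - (x.1 + z.1) = k := by subst hx hy hz; exact hk
  have hxU : x ∈ U1 ∪ U2 ε := hx ▸ rep2_mem_of_mem_image (fun _ ↦ mem_Ico_prod_of_mem_U) hθx
  have hzU : z ∈ U1 ∪ U2 ε := hz ▸ rep2_mem_of_mem_image (fun _ ↦ mem_Ico_prod_of_mem_U) hθz
  have hd₁ : d.1 = (z.1 - x.1) / 2 := by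
    rw [hd, Prod.smul_fst, Prod.fst_sub, smul_eq_mul]; ring
  have hd₂ : d.2 = (z.2 - x.2) / 2 := by
    rw [hd, Prod.smul_snd, Prod.snd_sub, smul_eq_mul]; ring
  have hclose : |(x.1 + x.2) - (z.1 + z.2)| ≤ ε := by
    rw [abs_le] at hsmall ⊢
    constructor <;> linarith
  calc 2 * d.1^2 = (z.1 - x.1)^2 / 2 := by rw [hd₁]; ring
    _ ≤ _ := sq_sub_div_two_le_br (mem_Ico_prod_of_mem_U hxU).1 (hy ▸ rep_mem_Ico θy.1)
      (mem_Ico_prod_of_mem_U hzU).1 hk (half_le_fst_of_one_le_fst_add_fst hxU hzU hclose)
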